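/- Let F = (A, C) be a finite AAF and l a labelling with no argument labelled out. Then there exists a preference function f over F such that l is a complete labelling of the fPSG (A, f⁻¹(1)) if and only if there exists a ranking function ψ : A → ℤ for (F,l). -/
import Mathlib


/-- The three labels of a labelling: `inn` (in), `out`, `undec`. -/
inductive Label where
  | inn : Label
  | out : Label
  | undec : Label
deriving DecidableEq

/-- Undirected connectivity: reachability in the symmetric closure of `C`.
`Conn C a b` holds iff `a` and `b` are joined by an undirected path, i.e.
they lie in the same connected component of `(A, C)`. -/
def Conn {A : Type*} (C : A → A → Prop) : A → A → Prop :=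
  Relation.ReflTransGen (fun x y => C x y ∨ C y x)

/-- A CC-wise total order on the AAF `(A, C)`: a reflexive transitive relation
whose restriction to each connected component is total. -/
structure CCOrder {A : Type*} (C : A → A → Prop) where
  le : A → A → Prop
  refl : ∀ a, le a a
  trans : ∀ a b c, le a b → le b c → le a c
  total : ∀ a b, Conn C a b → le a b ∨ le b a

/-- Strict part: `a ≺ b` iff `a ≼ b` and not `b ≼ a`. -/
def CCOrder.lt {A : Type*} {C : A → A → Prop} (r : CCOrder C) (a b : A) : Prop :=
  r.le a b ∧ ¬ r.le b a

/-- Reduction 1: `C₁ = {(a,b) | ((a,b) ∈ C ∧ b ≼ a) ∨ ((b,a) ∈ C ∧ b ≺ a)}`. -/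
def red1 {A : Type*} (C : A → A → Prop) (r : CCOrder C) (a b : A) : Prop :=
  (C a b ∧ r.le b a) ∨ (C b a ∧ r.lt b a)

/-- Reduction 2: `C₂ = {(a,b) ∈ C | b ≼ a ∨ (b,a) ∉ C}`. -/
def red2 {A : Type*} (C : A → A → Prop) (r : CCOrder C) (a b : A) : Prop :=
  C a b ∧ (r.le b a ∨ ¬ C b a)

/-- Reduction 3: `C₁ ∪ C₂`. -/
def red3 {A : Type*} (C : A → A → Prop) (r : CCOrder C) (a b : A) : Prop :=
  red1 C r a b ∨ red2 C r a b

/-- Reduction 4: `C₄ = {(a,b) ∈ C | b ≼ a}`. -/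
def red4 {A : Type*} (C : A → A → Prop) (r : CCOrder C) (a b : A) : Prop :=
  C a b ∧ r.le b a

/-- `l` is a complete labelling of the attack relation `C`:
`l a = in` iff all attackers of `a` are `out`, and
`l a = out` iff some attacker of `a` is `in` (and `undec` otherwise,
which is automatic for a three-valued labelling). -/
def CompleteLabelling {A : Type*} (C : A → A → Prop) (l : A → Label) : Prop :=
  ∀ a, (l a = Label.inn ↔ ∀ b, C b a → l b = Label.out) ∧
       (l a = Label.out ↔ ∃ b, C b a ∧ l b = Label.inn)

/-- `(a,b) ∈ F₁`: an attack of `C` assigned value 1 by `f`. -/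
def inF1 {A : Type*} (C : A → A → Prop) (f : A → A → Bool) (a b : A) : Prop :=
  C a b ∧ f a b = true

/-- `(a,b) ∈ F₀`: an attack of `C` assigned value 0 by `f`. -/
def inF0 {A : Type*} (C : A → A → Prop) (f : A → A → Bool) (a b : A) : Prop :=
  C a b ∧ f a b = false

/-- The relation `conv(F₀) ∪ F₁`. -/
def Drel {A : Type*} (C : A → A → Prop) (f : A → A → Bool) (a b : A) : Prop :=
  inF0 C f b a ∨ inF1 C f a b

/-- The relation `F₁ \ conv(F₀)`. -/
def Erel {A : Type*} (C : A → A → Prop) (f : A → A → Bool) (a b : A) : Prop :=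
  inF1 C f a b ∧ ¬ inF0 C f b a

/-- `f` is a preference function over `(A, C)`: every directed cycle of
`conv(F₀) ∪ F₁` is entirely contained in `F₁ \ conv(F₀)`.  Equivalently
(edge-wise): every edge of `conv(F₀) ∪ F₁` lying on a directed cycle
(i.e. admitting a return path) belongs to `F₁ \ conv(F₀)`. -/
def IsPrefFun {A : Type*} (C : A → A → Prop) (f : A → A → Bool) : Prop :=
  ∀ a b, Drel C f a b → Relation.ReflTransGen (Drel C f) b a → Erel C f a b

/-- A ranking function for `(F, l)` (assuming no argument is labelled `out`):
(1) every attack touching an `in`-labelled argument strictly decreases rank, and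
(2) every `undec` argument has an `undec` attacker of rank at most its own. -/
def IsRanking {A : Type*} (C : A → A → Prop) (l : A → Label) (ψ : A → ℤ) : Prop :=
  (∀ u v, C u v → (l u = Label.inn ∨ l v = Label.inn) → ψ u > ψ v) ∧
  (∀ u, l u = Label.undec → ∃ v, C v u ∧ l v = Label.undec ∧ ψ v ≤ ψ u)
/-- with no `out`-labelled argument, some fPSG of `F` admits `l`
as a complete labelling iff a ranking function for `(F, l)` exists. -/
theorem stmt11 {A : Type*} [Fintype A] (C : A → A → Prop) (l : A → Label)
    (hno : ∀ a, l a ≠ Label.out) :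
    (∃ f : A → A → Bool, IsPrefFun C f ∧ CompleteLabelling (inF1 C f) l) ↔
      (∃ ψ : A → ℤ, IsRanking C l ψ) := by
  classical
  constructor
  · rintro ⟨f, hpf, hcl⟩
    let P : A → Finset A :=
      fun a => Finset.univ.filter (fun x => Relation.ReflTransGen (Drel C f) x a)
    have hmem : ∀ x a, x ∈ P a ↔ Relation.ReflTransGen (Drel C f) x a := by
      intro x a
      show x ∈ Finset.univ.filter _ ↔ _
      simp
    have hmono : ∀ a b, Drel C f a b → P a ⊆ P b := by
      intro a b hab x hx
      rw [hmem] at hx ⊢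
      exact hx.tail hab
    have hstrict : ∀ a b, Drel C f a b → ¬ Erel C f a b → (P a).card < (P b).card := by
      intro a b hab hnE
      apply Finset.card_lt_card
      rw [Finset.ssubset_iff_of_subset (hmono a b hab)]
      refine ⟨b, (hmem b b).2 Relation.ReflTransGen.refl, ?_⟩
      intro hb
      exact hnE (hpf a b hab ((hmem b a).1 hb))
    refine ⟨fun a => ((P a).card : ℤ), ?_, ?_⟩
    · intro u v hC hinn
      have hf : f u v = false := by
        cases hft : f u v with
        | false => rfl
        | true =>
          have hf1 : inF1 C f u v := ⟨hC, hft⟩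
          rcases hinn with hu | hv
          · exact absurd (((hcl v).2).2 ⟨u, hf1, hu⟩) (hno v)
          · exact absurd (((hcl v).1).1 hv u hf1) (hno u)
      have hD : Drel C f v u := Or.inl ⟨hC, hf⟩
      have hnE : ¬ Erel C f v u := fun hE => hE.2 ⟨hC, hf⟩
      have := hstrict v u hD hnE
      show ((P u).card : ℤ) > ((P v).card : ℤ)
      exact_mod_cast this
    · intro u hu
      have hnin : l u ≠ Label.inn := by simp [hu]
      have hne : ¬ ∀ b, inF1 C f b u → l b = Label.out :=
        fun h => hnin (((hcl u).1).2 h)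
      push_neg at hne
      obtain ⟨b, hb1, hb2⟩ := hne
      have hbund : l b = Label.undec := by
        cases hlb : l b with
        | inn => exact absurd (((hcl u).2).2 ⟨b, hb1, hlb⟩) (by simp [hu])
        | out => exact absurd hlb hb2
        | undec => rfl
      refine ⟨b, hb1.1, hbund, ?_⟩
      have := Finset.card_le_card (hmono b u (Or.inr hb1))
      show ((P b).card : ℤ) ≤ ((P u).card : ℤ)
      exact_mod_cast this
  · rintro ⟨ψ, h1, h2⟩
    refine ⟨fun u v => decide (l u = Label.undec ∧ l v = Label.undec ∧ ψ u ≤ ψ v), ?_, ?_⟩ <;>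
      set f : A → A → Bool :=
        fun u v => decide (l u = Label.undec ∧ l v = Label.undec ∧ ψ u ≤ ψ v) with hfdef
    all_goals
      have hftrue : ∀ u v, f u v = true ↔
          (l u = Label.undec ∧ l v = Label.undec ∧ ψ u ≤ ψ v) := by
        intro u v; simp [hfdef]
    · -- preference function
      have hF0 : ∀ a b, inF0 C f b a → ψ a < ψ b := by
        intro a b h
        obtain ⟨hC, hfb⟩ := h
        have hnot : ¬ (l b = Label.undec ∧ l a = Label.undec ∧ ψ b ≤ ψ a) := by
          rw [← hftrue b a]
          simp [hfb]
        cases hlb : l b with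
        | inn => exact h1 b a hC (Or.inl hlb)
        | out => exact absurd hlb (hno b)
        | undec =>
          cases hla : l a with
          | inn => exact h1 b a hC (Or.inr hla)
          | out => exact absurd hla (hno a)
          | undec =>
            by_contra hle
            push_neg at hle
            exact hnot ⟨hlb, hla, hle⟩
      have hD : ∀ a b, Drel C f a b → ψ a ≤ ψ b := by
        intro a b hab
        rcases hab with h0 | h1'
        · exact le_of_lt (hF0 a b h0)
        · exact ((hftrue a b).1 h1'.2).2.2
      have hRT : ∀ a b, Relation.ReflTransGen (Drel C f) a b → ψ a ≤ ψ b := by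
        intro a b h
        induction h with
        | refl => exact le_refl _
        | tail _ hd ih => exact le_trans ih (hD _ _ hd)
      intro a b hab hret
      have hba := hRT b a hret
      have h0 : ¬ inF0 C f b a := fun h => absurd (hF0 a b h) (not_lt.2 hba)
      rcases hab with hl | hr
      · exact absurd hl h0
      · exact ⟨hr, h0⟩
    · -- complete labelling
      intro a
      constructor
      · constructor
        · intro ha b hb
          obtain ⟨hC, hfb⟩ := hb
          have hx := ((hftrue b a).1 hfb).2.1
          rw [ha] at hx
          exact Label.noConfusion hx
        · intro h
          cases hla : l a with
          | inn => rfl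
          | out => exact absurd hla (hno a)
          | undec =>
            obtain ⟨v, hv1, hv2, hv3⟩ := h2 a hla
            have hfv : f v a = true := (hftrue v a).2 ⟨hv2, hla, hv3⟩
            exact absurd (h v ⟨hv1, hfv⟩) (hno v)
      · constructor
        · intro ha; exact absurd ha (hno a)
        · rintro ⟨b, ⟨hC, hfb⟩, hbinn⟩
          have hx := ((hftrue b a).1 hfb).1
          rw [hbinn] at hx
          exact Label.noConfusion hx
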